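/- arXiv:1802.04217 — 3 statements merged into one kernel-verified Lean document; each statement's English description precedes it below -/
import Mathlib

section
/- In the setting of the proof of the Livšic theorem, with P defined on the orbit O(x) by P(f^n(x)) = A^n(x): there exists a constant T > 0 such that for every m ∈ ℕ, if f^m(x) ∈ G then ‖A^m(x)‖ ≤ T. -/
/-!
Cover the compact set `G` by finitely many balls of radius `β / 2`. Any visit `f^[m] x ∈ G` lies
in one of these balls, and so does the first visit `f^[k] x ∈ G` to that ball. These two points
of `O(x) ∩ G` are `β`-close with `k ≤ m`, so `‖A^(m-k)(f^[k] x) - 1‖ ≤ C̃ h^α`, and the cocycle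
identity `A^m(x) = A^(m-k)(f^[k] x) A^k(x)` bounds `‖A^m(x)‖` by `1 + C̃ h^α` times one of the
finitely many numbers `‖A^k(x)‖`.
-/

open MeasureTheory Filter Metric Set Function
open scoped Topology NNReal Manifold ENNReal

noncomputable section

abbrev Euc (m : ℕ) := EuclideanSpace ℝ (Fin m)
abbrev GLd (d : ℕ) := (Euc d →L[ℝ] Euc d)ˣ

def cocycle {M : Type*} {d : ℕ} (f : M → M) (A : M → GLd d) : ℕ → M → GLd d
  | 0, _ => 1
  | n + 1, x => A (f^[n] x) * cocycle f A n x

def cocycleCLM {M : Type*} {d : ℕ} (f : M → M) (A : M → GLd d) (n : ℕ) (x : M) :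
    Euc d →L[ℝ] Euc d := (cocycle f A n x : Euc d →L[ℝ] Euc d)

def cocycleInv {M : Type*} {d : ℕ} (f : M → M) (A : M → GLd d) (n : ℕ) (x : M) :
    Euc d →L[ℝ] Euc d := (((cocycle f A n x)⁻¹ : GLd d) : Euc d →L[ℝ] Euc d)

def PeriodicObstructionVanishes {M : Type*} {d : ℕ} (f : M → M) (A : M → GLd d) : Prop :=
  ∀ n : ℕ, 0 < n → ∀ p : M, f^[n] p = p → cocycle f A n p = 1

def fwdOrbit {M : Type*} (f : M → M) (x : M) : Set M := Set.range fun n : ℕ => f^[n] x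

def measSupport {M : Type*} [TopologicalSpace M] [MeasurableSpace M] (μ : Measure M) : Set M :=
  {x | ∀ U ∈ nhds x, 0 < μ U}

def stableSet {M : Type*} [MetricSpace M] (f : M → M) (x : M) : Set M :=
  {y | Tendsto (fun n : ℕ => dist (f^[n] y) (f^[n] x)) atTop (𝓝 0)}

def localStable {M : Type*} [MetricSpace M] (f : M → M) (δ : ℝ) (x : M) : Set M :=
  stableSet f x ∩ closedBall x δ

def hyperbolicBlock {M : Type*} [MetricSpace M] (f g : M → M) (C τ δ : ℝ) : Set M :=
  {x | (∀ y ∈ localStable f δ x, ∀ n : ℕ,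
          dist (f^[n] y) (f^[n] x) ≤ C * Real.exp (-τ * n) * dist y x) ∧
       (∀ y ∈ localStable g δ x, ∀ n : ℕ,
          dist (g^[n] y) (g^[n] x) ≤ C * Real.exp (-τ * n) * dist y x)}

def dominationSet {M : Type*} {d : ℕ} (f g : M → M) (A : M → GLd d) (N : ℕ) (θ : ℝ) :
    Set M :=
  {x | (∀ k : ℕ, 1 ≤ k →
          ∏ j ∈ Finset.range k,
            (‖cocycleCLM f A N (f^[j * N] x)‖ * ‖cocycleInv f A N (f^[j * N] x)‖)
            ≤ Real.exp (θ * k * N)) ∧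
       (∀ k : ℕ, 1 ≤ k →
          ∏ j ∈ Finset.range k,
            (‖cocycleCLM g (fun y => (A (g y))⁻¹) N (g^[j * N] x)‖ *
             ‖cocycleInv g (fun y => (A (g y))⁻¹) N (g^[j * N] x)‖)
            ≤ Real.exp (θ * k * N))}

def ClosingProperty {M : Type*} [MetricSpace M] (f : M → M) (G : Set M) (C η h β : ℝ) : Prop :=
  ∀ y ∈ G, ∀ n : ℕ, dist (f^[n] y) y < β → f^[n] y ∈ G →
    ∃ p : M, f^[n] p = p ∧
      ∀ i : ℕ, i ≤ n → dist (f^[i] y) (f^[i] p) ≤ h * C * Real.exp (-η * (min i (n - i) : ℕ))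

def freqGT {M : Type*} (T : M → M) (S : Set M) (x : M) : Prop :=
  ∃ c : ℝ, 1 / 2 < c ∧
    Tendsto (fun n : ℕ => (∑ i ∈ Finset.Icc 1 n, S.indicator (fun _ => (1 : ℝ)) (T^[i] x)) / n)
      atTop (𝓝 c)

def freqCond {M : Type*} (f g : M → M) (S : Set M) (x : M) : Prop :=
  freqGT f S x ∧ freqGT g S x

section Manifold

variable {m : ℕ} {M : Type*} [MetricSpace M] [CompactSpace M]
  [ChartedSpace (Euc m) M] [IsManifold (𝓡 m) (⊤ : ℕ∞) M]

def tangentNorm {x : M} (v : TangentSpace (𝓡 m) x) : ℝ := ‖show Euc m from v‖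

def IsC1HolderDiffeo (f : M → M) : Prop :=
  ∃ g : M → M, Function.LeftInverse g f ∧ Function.RightInverse g f ∧
    ContMDiff (𝓡 m) (𝓡 m) 1 f ∧ ContMDiff (𝓡 m) (𝓡 m) 1 g ∧
    ∃ εh K : ℝ≥0, 0 < εh ∧ ∀ x : M,
      HolderOnWith K εh (fderiv ℝ (writtenInExtChartAt (𝓡 m) (𝓡 m) x f))
        (extChartAt (𝓡 m) x).target

def IsHyperbolicMeasure [MeasurableSpace M] (f : M → M) (μ : Measure M) : Prop :=
  ∀ᵐ x ∂μ, ∀ v : TangentSpace (𝓡 m) x, v ≠ 0 →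
    ∃ lam : ℝ, lam ≠ 0 ∧
      Tendsto (fun n : ℕ => Real.log (tangentNorm (mfderiv (𝓡 m) (𝓡 m) (f^[n]) x v)) / n)
        atTop (𝓝 lam)

def IsChiHyperbolic [MeasurableSpace M] (f : M → M) (μ : Measure M) (χ : ℝ) : Prop :=
  0 < χ ∧ ∀ᵐ x ∂μ, ∀ v : TangentSpace (𝓡 m) x, v ≠ 0 →
    ∃ lam : ℝ, χ < |lam| ∧
      Tendsto (fun n : ℕ => Real.log (tangentNorm (mfderiv (𝓡 m) (𝓡 m) (f^[n]) x v)) / n)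
        atTop (𝓝 lam)

def pesinSet (f g : M → M) (χ ε N : ℝ) : Set M :=
  {x | ∃ Es Eu : Submodule ℝ (TangentSpace (𝓡 m) x),
    Es ⊔ Eu = ⊤ ∧ Es ⊓ Eu = ⊥ ∧
    (∀ v ∈ Es, ∀ n : ℕ,
      tangentNorm (mfderiv (𝓡 m) (𝓡 m) (f^[n]) x v) ≤
        N * Real.exp (-(χ - ε) * n) * tangentNorm v) ∧
    (∀ v ∈ Eu, ∀ n : ℕ,
      tangentNorm (mfderiv (𝓡 m) (𝓡 m) (g^[n]) x v) ≤
        N * Real.exp (-(χ - ε) * n) * tangentNorm v)}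

end Manifold

def HasLocalProductStructure {M : Type*} [MetricSpace M] [MeasurableSpace M]
    (f g : M → M) (μ : Measure M) : Prop :=
  ∃ δ₀ : ℝ, 0 < δ₀ ∧ ∀ x ∈ measSupport μ, ∀ δ : ℝ, 0 < δ → δ ≤ δ₀ →
    ∃ (Nu Ns : Set M) (b : M → M → M) (μu μs : Measure M),
      IsCompact Nu ∧ IsCompact Ns ∧ x ∈ Nu ∧ x ∈ Ns ∧
      Nu ⊆ localStable g δ x ∧ Ns ⊆ localStable f δ x ∧
      (∀ z ∈ Nu, ∀ w ∈ Ns, b z w ∈ stableSet f z ∩ stableSet g w) ∧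
      Set.InjOn (fun p : M × M => b p.1 p.2) (Nu ×ˢ Ns) ∧
      μu (Set.univ \ Nu) = 0 ∧ μs (Set.univ \ Ns) = 0 ∧
      μ.restrict (Set.image2 b Nu Ns) ≪
        Measure.map (fun p : M × M => b p.1 p.2) (μu.prod μs) ∧
      Measure.map (fun p : M × M => b p.1 p.2) (μu.prod μs) ≪
        μ.restrict (Set.image2 b Nu Ns)

def topLyapunov {M : Type*} {d : ℕ} (f : M → M) (A : M → GLd d) (x : M) : ℝ :=
  Filter.limsup (fun n : ℕ => Real.log ‖cocycleCLM f A n x‖ / n) Filter.atTop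

def IsSDominated {M : Type*} [MetricSpace M] {d : ℕ} (f g : M → M) (A : M → GLd d)
    (s : ℝ) (x : M) : Prop :=
  ∃ (Cc τ δ θ : ℝ) (N : ℕ), 0 < Cc ∧ 0 < τ ∧ 0 < δ ∧ 0 < θ ∧ 1 ≤ N ∧ s * θ < τ ∧
    x ∈ hyperbolicBlock f g Cc τ δ ∩ dominationSet f g A N θ

def zOrbit {M : Type*} (f g : M → M) (x : M) : Set M :=
  {y | (∃ n : ℕ, f^[n] x = y) ∨ ∃ n : ℕ, g^[n] x = y}

theorem IsCompact.exists_finset_earlier_near {X : Type*} [PseudoMetricSpace X] {G : Set X}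
    (hG : IsCompact G) (u : ℕ → X) {r : ℝ} (hr : 0 < r) :
    ∃ S : Finset ℕ, ∀ m, u m ∈ G → ∃ k ∈ S, k ≤ m ∧ u k ∈ G ∧ dist (u k) (u m) < r := by
  obtain ⟨t, -, htG⟩ := hG.elim_nhds_subcover (fun c => ball c (r / 2))
    fun c _ => ball_mem_nhds c (half_pos hr)
  refine ⟨t.image fun c => sInf {n | u n ∈ G ∩ ball c (r / 2)}, fun m hm => ?_⟩
  obtain ⟨c, hct, hmc⟩ := mem_iUnion₂.1 (htG hm)
  set firstVisit := sInf {n | u n ∈ G ∩ ball c (r / 2)}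
  have hmVisit : m ∈ {n | u n ∈ G ∩ ball c (r / 2)} := ⟨hm, hmc⟩
  obtain ⟨hfirstG, hfirstc⟩ : u firstVisit ∈ G ∩ ball c (r / 2) := Nat.sInf_mem ⟨m, hmVisit⟩
  refine ⟨firstVisit, Finset.mem_image_of_mem _ hct, Nat.sInf_le hmVisit, hfirstG, ?_⟩
  calc dist (u firstVisit) (u m) ≤ dist (u firstVisit) c + dist c (u m) := dist_triangle _ _ _
    _ < r / 2 + r / 2 := add_lt_add hfirstc (by rwa [dist_comm])
    _ = r := add_halves r

section Cocycle

variable {M : Type*} {d : ℕ} (f : M → M) (A : M → GLd d)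

theorem cocycle_add (n k : ℕ) (x : M) :
    cocycle f A (n + k) x = cocycle f A n (f^[k] x) * cocycle f A k x := by
  induction n with
  | zero => simp [cocycle]
  | succ n ih =>
    rw [Nat.add_right_comm, cocycle, ih, cocycle, ← iterate_add_apply, mul_assoc]

theorem norm_cocycleCLM_add_le_of_norm_sub_one_le {n k : ℕ} {x : M} {c : ℝ}
    (hc : ‖cocycleCLM f A n (f^[k] x) - 1‖ ≤ c) :
    ‖cocycleCLM f A (n + k) x‖ ≤ (1 + c) * ‖cocycleCLM f A k x‖ := by
  have hn : ‖cocycleCLM f A n (f^[k] x)‖ ≤ 1 + c :=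
    calc ‖cocycleCLM f A n (f^[k] x)‖
        ≤ ‖(1 : Euc d →L[ℝ] Euc d)‖ + ‖cocycleCLM f A n (f^[k] x) - 1‖ :=
          norm_le_norm_add_norm_sub' _ _
      _ ≤ 1 + c := add_le_add ContinuousLinearMap.norm_id_le hc
  calc ‖cocycleCLM f A (n + k) x‖
      ≤ ‖cocycleCLM f A n (f^[k] x)‖ * ‖cocycleCLM f A k x‖ := by
        rw [cocycleCLM, cocycle_add, Units.val_mul]
        exact norm_mul_le _ _
    _ ≤ (1 + c) * ‖cocycleCLM f A k x‖ := by gcongr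

end Cocycle

theorem corollary_bound_T_general
    {d : ℕ} {M : Type*} [MetricSpace M]
    (f : M → M)
    (A : M → GLd d) (α : ℝ≥0)
    (G : Set M) (hGcomp : IsCompact G)
    (x : M)
    (h β Ctil : ℝ) (hh0 : 0 < h) (hβ0 : 0 < β)
    (hCtil : 0 < Ctil)
    (hprop : ∀ (z : M) (n : ℕ), z ∈ fwdOrbit f x ∩ G → f^[n] z ∈ fwdOrbit f x ∩ G →
      dist z (f^[n] z) < β → ‖cocycleCLM f A n z - 1‖ ≤ Ctil * h ^ (α : ℝ)) :
    ∃ T : ℝ, 0 < T ∧ ∀ mm : ℕ, f^[mm] x ∈ G → ‖cocycleCLM f A mm x‖ ≤ T := by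
  obtain ⟨S, hS⟩ := hGcomp.exists_finset_earlier_near (fun n => f^[n] x) hβ0
  refine ⟨(1 + Ctil * h ^ (α : ℝ)) * ∑ j ∈ S, ‖cocycleCLM f A j x‖ + 1, by positivity, ?_⟩
  intro mm hmm
  obtain ⟨k, hkS, hkmm, hkG, hnear⟩ := hS mm hmm
  obtain ⟨n, rfl⟩ := Nat.exists_eq_add_of_le' hkmm
  have hreturn : ‖cocycleCLM f A n (f^[k] x) - 1‖ ≤ Ctil * h ^ (α : ℝ) := by
    rw [iterate_add_apply] at hmm hnear
    exact hprop _ n ⟨⟨k, rfl⟩, hkG⟩ ⟨⟨n + k, iterate_add_apply f n k x⟩, hmm⟩ hnear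
  calc ‖cocycleCLM f A (n + k) x‖
      ≤ (1 + Ctil * h ^ (α : ℝ)) * ‖cocycleCLM f A k x‖ :=
        norm_cocycleCLM_add_le_of_norm_sub_one_le f A hreturn
    _ ≤ (1 + Ctil * h ^ (α : ℝ)) * ∑ j ∈ S, ‖cocycleCLM f A j x‖ := by
        gcongr
        exact Finset.single_le_sum (fun j _ => norm_nonneg (cocycleCLM f A j x)) hkS
    _ ≤ _ := le_add_of_nonneg_right zero_le_one

/-- **Corollary 3.4.** In the setting of the proof of the Livšic theorem, with `P` defined
on the orbit of `x` by `P(f^n(x)) = A^n(x)`: there is a constant `T > 0` such that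
whenever `f^m(x) ∈ G` one has `‖A^m(x)‖ ≤ T`. -/
theorem corollary_bound_T
    {m d : ℕ} {M : Type*} [MetricSpace M] [CompactSpace M] [Nonempty M]
    [ChartedSpace (Euc m) M] [IsManifold (𝓡 m) (⊤ : ℕ∞) M]
    [MeasurableSpace M] [BorelSpace M]
    (f : M → M) (hf : IsC1HolderDiffeo (m := m) f)
    (μ : Measure M) [IsProbabilityMeasure μ] (herg : Ergodic f μ)
    (χ : ℝ) (hχ : IsChiHyperbolic (m := m) f μ χ)
    (A : M → GLd d) (α K : ℝ≥0) (hα : 0 < α)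
    (hA : HolderWith K α fun w => (A w : Euc d →L[ℝ] Euc d))
    (hobs : PeriodicObstructionVanishes f A)
    (G : Set M) (hGcomp : IsCompact G) (hGbig : (9 / 10 : ℝ≥0∞) < μ G)
    (x : M) (hxG : x ∈ G)
    (hdenseG : G ⊆ closure (fwdOrbit f x ∩ G))
    (hdenseSupp : measSupport μ ⊆ closure (fwdOrbit f x))
    (ε η C N : ℝ) (hε : 0 < ε) (hηε : ε < η) (hηχ : η < χ - ε)
    (hC : 0 < C) (hN : 1 ≤ N) (hεsmall : 10 * ε < (α : ℝ) * η)
    (hgrow : ∀ z ∈ G, ∀ n : ℕ,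
      ‖cocycleCLM f A n z‖ ≤ N * Real.exp (ε * n) ∧
      ‖cocycleInv f A n z‖ ≤ N * Real.exp (ε * n))
    (h β Ctil : ℝ) (hh0 : 0 < h) (hh1 : h < 1) (hβ0 : 0 < β) (hβh : β < h)
    (hclose : ClosingProperty f G C η h β) (hCtil : 0 < Ctil)
    (hprop : ∀ (z : M) (n : ℕ), z ∈ fwdOrbit f x ∩ G → f^[n] z ∈ fwdOrbit f x ∩ G →
      dist z (f^[n] z) < β → ‖cocycleCLM f A n z - 1‖ ≤ Ctil * h ^ (α : ℝ)) :
    ∃ T : ℝ, 0 < T ∧ ∀ mm : ℕ, f^[mm] x ∈ G → ‖cocycleCLM f A mm x‖ ≤ T :=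
  corollary_bound_T_general f A α G hGcomp x h β Ctil hh0 hβ0 hCtil hprop
end
end

section
/- In the setting of the proof of the Livšic theorem, let z ∈ O(x) ∩ G with f^{2m}(z) ∈ O(x) ∩ G and d(z, f^{2m}(z)) < β, and let p be the periodic point with f^{2m}(p) = p and d(f^i(z), f^i(p)) ≤ hC e^{−η·min{i, 2m−i}} given by the Closing Lemma. Then there exists a constant C̃₁ > 0 independent of h, z, p, m such that ‖A^m(p)^{-1} A^m(z) − Id‖ ≤ C̃₁ h^α; in particular, for h ∈ (0,1), ‖A^m(p)^{-1} A^m(z)‖ ≤ C̃₁ + 1. -/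
open MeasureTheory Filter Metric Set Function
open scoped Topology NNReal Manifold ENNReal

noncomputable section

/-!
Telescoping along the two orbit segments writes `A^m(p)⁻¹ A^m(z) - Id` as
`∑_{i<m} A^{i+1}(p)⁻¹ (A(f^i z) - A(f^i p)) A^i(z)`. By Hölder continuity of `A` and the
exponential closeness of the orbits, the `i`-th term is at most
`L e^{2ε(i+1)} · K (h C e^{-ηi})^α · N e^{εi}`, i.e. a constant times `h^α r^i` with
`r = e^{3ε - αη} < 1`, and the geometric series sums to a constant times `h^α`.
-/

section Telescoping

variable {M : Type*} {d : ℕ} (f : M → M) (A : M → GLd d)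

@[simp]
lemma cocycleCLM_zero (x : M) : cocycleCLM f A 0 x = 1 := rfl

@[simp]
lemma cocycleInv_zero (x : M) : cocycleInv f A 0 x = 1 := by
  simp [cocycleInv, cocycle]

lemma cocycleCLM_succ (n : ℕ) (x : M) :
    cocycleCLM f A (n + 1) x = A (f^[n] x) * cocycleCLM f A n x := rfl

lemma cocycleInv_succ_mul (n : ℕ) (x : M) :
    cocycleInv f A (n + 1) x * A (f^[n] x) = cocycleInv f A n x := by
  rw [cocycleInv, cocycleInv, cocycle, mul_inv_rev, Units.val_mul, mul_assoc, ← Units.val_mul,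
    inv_mul_cancel, Units.val_one, mul_one]

lemma cocycleInv_mul_cocycleCLM_sub_one_eq_sum (n : ℕ) (p z : M) :
    cocycleInv f A n p * cocycleCLM f A n z - 1 =
      ∑ i ∈ Finset.range n, cocycleInv f A (i + 1) p *
        ((A (f^[i] z) : Euc d →L[ℝ] Euc d) - A (f^[i] p)) * cocycleCLM f A i z := by
  have htel := Finset.sum_range_sub (fun i => cocycleInv f A i p * cocycleCLM f A i z) n
  simp only [cocycleInv_zero, cocycleCLM_zero, mul_one] at htel
  rw [← htel]
  refine Finset.sum_congr rfl fun i _ => ?_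
  rw [cocycleCLM_succ, ← cocycleInv_succ_mul f A i p]
  simp only [mul_sub, sub_mul, mul_assoc]

end Telescoping

open Real in
theorem norm_cocycleInv_mul_cocycleCLM_sub_one_le {M : Type*} [PseudoMetricSpace M] {d : ℕ}
    {f : M → M} {A : M → GLd d} {K α : ℝ≥0}
    (hA : HolderWith K α fun w => (A w : Euc d →L[ℝ] Euc d))
    {p z : M} {n : ℕ} {L N δ a b η : ℝ} (hL : 0 ≤ L) (hN : 0 ≤ N) (hδ : 0 ≤ δ)
    (hrate : a + b < α * η)
    (hinv : ∀ i ≤ n, ‖cocycleInv f A i p‖ ≤ L * exp (a * i))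
    (hfwd : ∀ i < n, ‖cocycleCLM f A i z‖ ≤ N * exp (b * i))
    (hdist : ∀ i < n, dist (f^[i] z) (f^[i] p) ≤ δ * exp (-η * i)) :
    ‖cocycleInv f A n p * cocycleCLM f A n z - 1‖ ≤
      L * exp a * K * δ ^ (α : ℝ) * N / (1 - exp (a + b - α * η)) := by
  set r := exp (a + b - α * η)
  have hr : r < 1 := exp_lt_one_iff.mpr (by linarith)
  set c := L * exp a * K * δ ^ (α : ℝ) * N
  have hterm : ∀ i ∈ Finset.range n,
      ‖cocycleInv f A (i + 1) p * ((A (f^[i] z) : Euc d →L[ℝ] Euc d) - A (f^[i] p)) *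
        cocycleCLM f A i z‖ ≤ c * r ^ i := by
    intro i hi
    rw [Finset.mem_range] at hi
    have hjump : ‖(A (f^[i] z) : Euc d →L[ℝ] Euc d) - A (f^[i] p)‖ ≤
        K * (δ * exp (-η * i)) ^ (α : ℝ) := by
      rw [← dist_eq_norm]
      exact hA.dist_le_of_le (hdist i hi)
    have hinv' : ‖cocycleInv f A (i + 1) p‖ ≤ L * exp (a * (i + 1)) := by
      exact_mod_cast hinv (i + 1) hi
    have hfwd' := hfwd i hi
    have hexp : exp (a * (i + 1)) * exp (-η * i * α) * exp (b * i) = exp a * r ^ i := by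
      rw [← exp_nat_mul, ← exp_add, ← exp_add, ← exp_add]
      ring_nf
    calc _ ≤ ‖cocycleInv f A (i + 1) p‖ *
          ‖(A (f^[i] z) : Euc d →L[ℝ] Euc d) - A (f^[i] p)‖ * ‖cocycleCLM f A i z‖ :=
          norm_mul₃_le
      _ ≤ L * exp (a * (i + 1)) * (K * (δ * exp (-η * i)) ^ (α : ℝ)) * (N * exp (b * i)) := by
          gcongr
      _ = c * r ^ i := by
          rw [mul_rpow hδ (exp_pos _).le, ← exp_mul]
          linear_combination (L * K * δ ^ (α : ℝ) * N) * hexp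
  have hgeom : ∑ i ∈ Finset.range n, r ^ i ≤ 1 / (1 - r) := by
    simpa using geom_sum_Ico_le_of_lt_one (m := 0) (n := n) (exp_pos _).le hr
  have hc : 0 ≤ c := by positivity
  calc _ = ‖∑ i ∈ Finset.range n, cocycleInv f A (i + 1) p *
          ((A (f^[i] z) : Euc d →L[ℝ] Euc d) - A (f^[i] p)) * cocycleCLM f A i z‖ := by
        rw [cocycleInv_mul_cocycleCLM_sub_one_eq_sum]
    _ ≤ ∑ i ∈ Finset.range n, c * r ^ i := (norm_sum_le _ _).trans (Finset.sum_le_sum hterm)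
    _ = c * ∑ i ∈ Finset.range n, r ^ i := (Finset.mul_sum _ _ _).symm
    _ ≤ c * (1 / (1 - r)) := by gcongr
    _ = c / (1 - r) := mul_one_div c (1 - r)

theorem aux_estimate_first_half_general
    {d : ℕ} {M : Type*} [MetricSpace M] (f : M → M) (A : M → GLd d) (α K : ℝ≥0)
    (hA : HolderWith K α fun w => (A w : Euc d →L[ℝ] Euc d)) (G : Set M) (x : M)
    (ε η C N : ℝ) (hε : 0 < ε)
    (hC : 0 < C) (hN : 1 ≤ N) (hεsmall : 10 * ε < (α : ℝ) * η)
    (hgrow : ∀ z ∈ G, ∀ n : ℕ,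
      ‖cocycleCLM f A n z‖ ≤ N * Real.exp (ε * n) ∧
      ‖cocycleInv f A n z‖ ≤ N * Real.exp (ε * n))
    (L : ℝ) (hL : 0 < L) :
    ∃ C1 : ℝ, 0 < C1 ∧
      ∀ h β : ℝ, 0 < h → h < 1 → 0 < β → ClosingProperty f G C η h β →
        ∀ (z p : M) (mm : ℕ),
          z ∈ fwdOrbit f x ∩ G → f^[2 * mm] z ∈ fwdOrbit f x ∩ G →
          dist z (f^[2 * mm] z) < β → f^[2 * mm] p = p →
          (∀ i : ℕ, i ≤ 2 * mm →
            dist (f^[i] z) (f^[i] p) ≤ h * C * Real.exp (-η * (min i (2 * mm - i) : ℕ))) →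
          (∀ i : ℕ, i ≤ mm → ‖cocycleInv f A i p‖ ≤ L * Real.exp (2 * ε * i)) →
          ‖cocycleInv f A mm p * cocycleCLM f A mm z - 1‖ ≤ C1 * h ^ (α : ℝ) ∧
          ‖cocycleInv f A mm p * cocycleCLM f A mm z‖ ≤ C1 + 1 := by
  set C1 := L * Real.exp (2 * ε) * (K + 1) * C ^ (α : ℝ) * N / (1 - Real.exp (2 * ε + ε - α * η))
  have hr : 0 < 1 - Real.exp (2 * ε + ε - α * η) :=
    sub_pos.mpr (Real.exp_lt_one_iff.mpr (by linarith))
  refine ⟨C1, div_pos (by positivity) hr, ?_⟩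
  intro h β h0 h1 _ _ z p mm hz _ _ _ hclose hinvp
  have hdist : ∀ i < mm, dist (f^[i] z) (f^[i] p) ≤ h * C * Real.exp (-η * i) := fun i hi => by
    simpa [min_eq_left (by omega : i ≤ 2 * mm - i)] using hclose i (by omega)
  have hfirst := norm_cocycleInv_mul_cocycleCLM_sub_one_le (hA.mono (le_self_add : K ≤ K + 1))
    hL.le (by linarith) (by positivity) (by linarith) hinvp (fun i _ => (hgrow z hz.2 i).1) hdist
  rw [Real.mul_rpow h0.le hC.le] at hfirst
  push_cast at hfirst
  have hC1 : ‖cocycleInv f A mm p * cocycleCLM f A mm z - 1‖ ≤ C1 * h ^ (α : ℝ) :=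
    hfirst.trans_eq (by ring)
  refine ⟨hC1, ?_⟩
  have hhα : h ^ (α : ℝ) ≤ 1 := Real.rpow_le_one h0.le h1.le α.coe_nonneg
  calc _ ≤ ‖(1 : Euc d →L[ℝ] Euc d)‖ + ‖cocycleInv f A mm p * cocycleCLM f A mm z - 1‖ :=
        norm_le_norm_add_norm_sub' _ _
    _ ≤ 1 + C1 * 1 := by
        gcongr
        · exact ContinuousLinearMap.norm_id_le
        · exact hC1.trans (by gcongr)
    _ = C1 + 1 := by ring

/-- **Estimate (3.3) in the proof of Proposition 3.2.** In the setting of the proof of the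
Livšic theorem, with `p` the periodic point of period `2m` shadowing the returning orbit
segment of `z`: there is `C̃₁ > 0`, independent of `h`, `z`, `p`, `m`, such that
`‖A^m(p)⁻¹ A^m(z) - Id‖ ≤ C̃₁ h^α`; in particular `‖A^m(p)⁻¹ A^m(z)‖ ≤ C̃₁ + 1`. -/
theorem aux_estimate_first_half
    {m d : ℕ} {M : Type*} [MetricSpace M] [CompactSpace M] [Nonempty M]
    [ChartedSpace (Euc m) M] [IsManifold (𝓡 m) (⊤ : ℕ∞) M]
    [MeasurableSpace M] [BorelSpace M]
    (f : M → M) (hf : IsC1HolderDiffeo (m := m) f)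
    (μ : Measure M) [IsProbabilityMeasure μ] (herg : Ergodic f μ)
    (χ : ℝ) (hχ : IsChiHyperbolic (m := m) f μ χ)
    (A : M → GLd d) (α K : ℝ≥0) (hα : 0 < α)
    (hA : HolderWith K α fun w => (A w : Euc d →L[ℝ] Euc d))
    (hobs : PeriodicObstructionVanishes f A)
    (G : Set M) (hGcomp : IsCompact G) (hGbig : (9 / 10 : ℝ≥0∞) < μ G)
    (x : M) (hxG : x ∈ G)
    (hdenseG : G ⊆ closure (fwdOrbit f x ∩ G))
    (hdenseSupp : measSupport μ ⊆ closure (fwdOrbit f x))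
    (ε η C N : ℝ) (hε : 0 < ε) (hηε : ε < η) (hηχ : η < χ - ε)
    (hC : 0 < C) (hN : 1 ≤ N) (hεsmall : 10 * ε < (α : ℝ) * η)
    (hgrow : ∀ z ∈ G, ∀ n : ℕ,
      ‖cocycleCLM f A n z‖ ≤ N * Real.exp (ε * n) ∧
      ‖cocycleInv f A n z‖ ≤ N * Real.exp (ε * n))
    (L : ℝ) (hL : 0 < L) :
    ∃ C1 : ℝ, 0 < C1 ∧
      ∀ h β : ℝ, 0 < h → h < 1 → 0 < β → ClosingProperty f G C η h β →
        ∀ (z p : M) (mm : ℕ),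
          z ∈ fwdOrbit f x ∩ G → f^[2 * mm] z ∈ fwdOrbit f x ∩ G →
          dist z (f^[2 * mm] z) < β → f^[2 * mm] p = p →
          (∀ i : ℕ, i ≤ 2 * mm →
            dist (f^[i] z) (f^[i] p) ≤ h * C * Real.exp (-η * (min i (2 * mm - i) : ℕ))) →
          (∀ i : ℕ, i ≤ mm → ‖cocycleInv f A i p‖ ≤ L * Real.exp (2 * ε * i)) →
          ‖cocycleInv f A mm p * cocycleCLM f A mm z - 1‖ ≤ C1 * h ^ (α : ℝ) ∧
          ‖cocycleInv f A mm p * cocycleCLM f A mm z‖ ≤ C1 + 1 :=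
  aux_estimate_first_half_general f A α K hA G x ε η C N hε hC hN hεsmall hgrow L hL
end
end

section
/- In the setting of the Hölder-regularity theorem, let T > 0 bound ‖P‖ and ‖P^{-1}‖ on X_ε and let L be the holonomy constant of the holonomy block O. Suppose y ∈ Δ_ε and x₂ ∈ W^s_loc(y), and that there is a sequence m_k → +∞ with f^{m_k}(y), f^{m_k}(x₂) ∈ X_ε ∩ O for all k. Then ‖Id − P(x₂)P(y)^{-1}‖ ≤ ‖H^{s,A}_{y x₂} − Id‖, and consequently ‖P(y) − P(x₂)‖ ≤ T·L·dist(y, x₂)^α. -/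
open MeasureTheory Filter Metric Set Function
open scoped Topology NNReal Manifold ENNReal

noncomputable section

/-!
Along both orbits `A^n(z) = P(fⁿ z) P(z)⁻¹`, so
`A^n(x₂)⁻¹ A^n(y) = P(x₂) · [P(fⁿ x₂)⁻¹ P(fⁿ y)] · P(y)⁻¹`.
At the times `m_k` both `f^{m_k} y` and `f^{m_k} x₂` lie in `X_ε`, where `P` is uniformly
continuous and `‖P⁻¹‖ ≤ T`, and their distance tends to `0`; hence the bracket tends to `Id`
and `H^{s,A}_{y x₂} = P(x₂) P(y)⁻¹`. The first inequality is therefore an equality, and the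
second follows from `P(y) - P(x₂) = (Id - P(x₂) P(y)⁻¹) P(y)`.
-/

section NormedRing

variable {R : Type*} [NormedRing R]

lemma Units.norm_inv_mul_sub_one_le (u v : Rˣ) :
    ‖((u⁻¹ : Rˣ) : R) * v - 1‖ ≤ ‖((u⁻¹ : Rˣ) : R)‖ * ‖(v : R) - u‖ := by
  calc ‖((u⁻¹ : Rˣ) : R) * v - 1‖ = ‖((u⁻¹ : Rˣ) : R) * ((v : R) - u)‖ := by
        rw [mul_sub, Units.inv_mul]
    _ ≤ _ := norm_mul_le _ _

lemma Units.norm_sub_le_norm_one_sub_mul_inv_mul (u : Rˣ) (a : R) :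
    ‖(u : R) - a‖ ≤ ‖1 - a * ((u⁻¹ : Rˣ) : R)‖ * ‖(u : R)‖ := by
  calc ‖(u : R) - a‖ = ‖(1 - a * ((u⁻¹ : Rˣ) : R)) * u‖ := by
        rw [sub_mul, one_mul, mul_assoc, Units.inv_mul, mul_one]
    _ ≤ _ := norm_mul_le _ _

lemma Units.tendsto_inv_mul_nhds_one {ι : Type*} {l : Filter ι} {u v : ι → Rˣ} {T : ℝ}
    (hT : ∀ i, ‖(((u i)⁻¹ : Rˣ) : R)‖ ≤ T)
    (huv : Tendsto (fun i => ‖(v i : R) - u i‖) l (𝓝 0)) :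
    Tendsto (fun i => (((u i)⁻¹ : Rˣ) : R) * v i) l (𝓝 1) := by
  rw [tendsto_iff_norm_sub_tendsto_zero]
  refine squeeze_zero (fun _ => norm_nonneg _) (fun i => ?_) (by simpa using huv.const_mul T)
  exact (Units.norm_inv_mul_sub_one_le _ _).trans
    (mul_le_mul_of_nonneg_right (hT i) (norm_nonneg _))

end NormedRing

lemma UniformContinuousOn.tendsto_dist_comp {α β ι : Type*} [PseudoMetricSpace α]
    [PseudoMetricSpace β] {F : α → β} {s : Set α} (hF : UniformContinuousOn F s)
    {l : Filter ι} {a b : ι → α} (ha : ∀ i, a i ∈ s) (hb : ∀ i, b i ∈ s)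
    (hab : Tendsto (fun i => dist (a i) (b i)) l (𝓝 0)) :
    Tendsto (fun i => dist (F (a i)) (F (b i))) l (𝓝 0) := by
  rw [← tendsto_uniformity_iff_dist_tendsto_zero (f := fun i => (a i, b i))] at hab
  rw [← tendsto_uniformity_iff_dist_tendsto_zero (f := fun i => (F (a i), F (b i)))]
  exact Tendsto.comp hF (tendsto_inf.2
    ⟨hab, tendsto_principal.2 (.of_forall fun i => Set.mk_mem_prod (ha i) (hb i))⟩)

section Cocycle

variable {M : Type*} {d : ℕ} {f : M → M} {A P : M → GLd d}

lemma cocycle_inv_mul_cocycle_eq_of_coboundary {n : ℕ} {x y : M}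
    (hx : P (f^[n] x) = cocycle f A n x * P x) (hy : P (f^[n] y) = cocycle f A n y * P y) :
    (cocycle f A n x)⁻¹ * cocycle f A n y = P x * ((P (f^[n] x))⁻¹ * P (f^[n] y)) * (P y)⁻¹ := by
  rw [hx, hy]
  group

theorem stableHolonomy_eq_of_coboundary [MetricSpace M] {X : Set M} {T : ℝ}
    (hPuc : UniformContinuousOn (fun w => (P w : Euc d →L[ℝ] Euc d)) X)
    (hPT : ∀ w ∈ X, ‖(((P w)⁻¹ : GLd d) : Euc d →L[ℝ] Euc d)‖ ≤ T)
    {x y : M} (hx : x ∈ stableSet f y)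
    (hPy : ∀ k : ℕ, P (f^[k] y) = cocycle f A k y * P y)
    (hPx : ∀ k : ℕ, P (f^[k] x) = cocycle f A k x * P x)
    {Hs : Euc d →L[ℝ] Euc d}
    (hHs : Tendsto (fun n : ℕ => cocycleInv f A n x * cocycleCLM f A n y) atTop (𝓝 Hs))
    {mk : ℕ → ℕ} (hmk : Tendsto mk atTop atTop)
    (hmkX : ∀ k : ℕ, f^[mk k] y ∈ X ∧ f^[mk k] x ∈ X) :
    Hs = (P x : Euc d →L[ℝ] Euc d) * (((P y)⁻¹ : GLd d) : Euc d →L[ℝ] Euc d) := by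
  have hPclose : Tendsto (fun k => ‖(P (f^[mk k] y) : Euc d →L[ℝ] Euc d) - P (f^[mk k] x)‖)
      atTop (𝓝 0) := by
    simpa only [dist_eq_norm'] using
      hPuc.tendsto_dist_comp (fun k => (hmkX k).2) (fun k => (hmkX k).1) (hx.comp hmk)
  have hQ := Units.tendsto_inv_mul_nhds_one (fun k => hPT _ (hmkX k).2) hPclose
  have hlim := (tendsto_const_nhds (x := (P x : Euc d →L[ℝ] Euc d)).mul hQ).mul
    (tendsto_const_nhds (x := (((P y)⁻¹ : GLd d) : Euc d →L[ℝ] Euc d)))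
  rw [mul_one] at hlim
  refine tendsto_nhds_unique (hHs.comp hmk) (hlim.congr fun k => ?_)
  simp only [Function.comp_apply, cocycleInv, cocycleCLM, ← Units.val_mul,
    cocycle_inv_mul_cocycle_eq_of_coboundary (hPx (mk k)) (hPy (mk k))]

end Cocycle

theorem holonomy_estimate_for_P_general
    {d : ℕ} {M : Type*} [MetricSpace M] [MeasurableSpace M]
    (f : M → M) (μ : Measure M) (A : M → GLd d) (α : ℝ≥0) (P : M → GLd d)
    (δ : ℝ) (O : Set M) (X : Set M)
    (hPuc : UniformContinuousOn (fun w => (P w : Euc d →L[ℝ] Euc d)) X)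
    (Xt : Set M) (hXt : Xt ⊆ X ∩ O)
    (T L : ℝ)
    (hPT : ∀ w ∈ X, ‖(P w : Euc d →L[ℝ] Euc d)‖ ≤ T ∧ ‖(((P w)⁻¹ : GLd d) : Euc d →L[ℝ] Euc d)‖ ≤ T)
    (y x₂ : M) (hy : y ∈ Xt ∩ measSupport μ) (hx₂ : x₂ ∈ localStable f δ y)
    (hPcocy : ∀ k : ℕ, P (f^[k] y) = cocycle f A k y * P y)
    (hPcocy₂ : ∀ k : ℕ, P (f^[k] x₂) = cocycle f A k x₂ * P x₂)
    (Hs : Euc d →L[ℝ] Euc d)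
    (hHs : Tendsto (fun n : ℕ => cocycleInv f A n x₂ * cocycleCLM f A n y) atTop (𝓝 Hs))
    (hHsL : ‖Hs - 1‖ ≤ L * dist y x₂ ^ (α : ℝ))
    (mk : ℕ → ℕ) (hmk : Tendsto mk atTop atTop)
    (hmkX : ∀ k : ℕ, f^[mk k] y ∈ X ∩ O ∧ f^[mk k] x₂ ∈ X ∩ O) :
    ‖1 - (P x₂ : Euc d →L[ℝ] Euc d) * (((P y)⁻¹ : GLd d) : Euc d →L[ℝ] Euc d)‖ ≤ ‖Hs - 1‖ ∧
    ‖(P y : Euc d →L[ℝ] Euc d) - (P x₂ : Euc d →L[ℝ] Euc d)‖ ≤ T * L * dist y x₂ ^ (α : ℝ) := by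
  have hHs_eq : Hs = (P x₂ : Euc d →L[ℝ] Euc d) * (((P y)⁻¹ : GLd d) : Euc d →L[ℝ] Euc d) :=
    stableHolonomy_eq_of_coboundary hPuc (fun w hw => (hPT w hw).2) hx₂.1 hPcocy hPcocy₂ hHs hmk
      fun k => ⟨(hmkX k).1.1, (hmkX k).2.1⟩
  have hH : ‖1 - (P x₂ : Euc d →L[ℝ] Euc d) * (((P y)⁻¹ : GLd d) : Euc d →L[ℝ] Euc d)‖ =
      ‖Hs - 1‖ := by
    rw [hHs_eq, norm_sub_rev]
  refine ⟨hH.le, ?_⟩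
  calc ‖(P y : Euc d →L[ℝ] Euc d) - (P x₂ : Euc d →L[ℝ] Euc d)‖
      ≤ ‖1 - (P x₂ : Euc d →L[ℝ] Euc d) * (((P y)⁻¹ : GLd d) : Euc d →L[ℝ] Euc d)‖ *
          ‖(P y : Euc d →L[ℝ] Euc d)‖ :=
        Units.norm_sub_le_norm_one_sub_mul_inv_mul _ _
    _ ≤ (L * dist y x₂ ^ (α : ℝ)) * T :=
        mul_le_mul (hH ▸ hHsL) (hPT y (hXt hy.1).1).1 (norm_nonneg _)
          ((norm_nonneg _).trans hHsL)
    _ = T * L * dist y x₂ ^ (α : ℝ) := by ring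

/-- **The key holonomy estimate in the proof of Theorem 1.2.** If `T` bounds `‖P‖` and
`‖P⁻¹‖` on `X_ε`, `L` is the holonomy constant of the holonomy block, `y ∈ Δ_ε`,
`x₂ ∈ W^s_loc(y)` and `f^{m_k}(y), f^{m_k}(x₂) ∈ X_ε ∩ 𝔒` along a sequence `m_k → ∞`,
then `‖Id - P(x₂)P(y)⁻¹‖ ≤ ‖H^{s,A}_{y x₂} - Id‖` and consequently
`‖P(y) - P(x₂)‖ ≤ T L dist(y,x₂)^α`. -/
theorem holonomy_estimate_for_P
    {m d : ℕ} {M : Type*} [MetricSpace M] [CompactSpace M] [Nonempty M]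
    [ChartedSpace (Euc m) M] [IsManifold (𝓡 m) ((⊤ : ℕ∞) : WithTop ℕ∞) M]
    [MeasurableSpace M] [BorelSpace M]
    (f g : M → M) (hf : IsC1HolderDiffeo (m := m) f)
    (hgf : Function.LeftInverse g f) (hfg : Function.RightInverse g f)
    (μ : Measure M) [IsProbabilityMeasure μ] [NullSingletonClass μ]
    (herg : Ergodic f μ) (hhyp : IsHyperbolicMeasure (m := m) f μ)
    (hlps : HasLocalProductStructure f g μ)
    (A : M → GLd d) (α K : ℝ≥0) (hα : 0 < α)
    (hA : HolderWith K α fun w => (A w : Euc d →L[ℝ] Euc d))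
    (P : M → GLd d) (hPmeas : Measurable fun w => (P w : Euc d →L[ℝ] Euc d))
    (hP : ∀ᵐ w ∂μ, A w = P (f w) * (P w)⁻¹)
    (ε : ℝ) (hε0 : 0 < ε) (hε1 : ε < 1 / 10)
    (Cc τ δ θ : ℝ) (N : ℕ) (hCc : 0 < Cc) (hτ : 0 < τ) (hδ : 0 < δ) (hθ : 0 < θ)
    (hN : 1 ≤ N) (hbunch : 2 * θ < τ)
    (O : Set M) (hOcomp : IsCompact O)
    (hOblock : O ⊆ hyperbolicBlock f g Cc τ δ ∩ dominationSet f g A N θ)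
    (hOμ : 1 - ENNReal.ofReal (ε / 2) < μ O)
    (X : Set M) (hXcomp : IsCompact X)
    (hXμ : 1 - ENNReal.ofReal (ε / 2) < μ X)
    (hPuc : UniformContinuousOn (fun w => (P w : Euc d →L[ℝ] Euc d)) X)
    (Xt : Set M) (hXt : Xt ⊆ X ∩ O)
    (T L : ℝ) (hT : 0 < T) (hL : 0 < L)
    (hPT : ∀ w ∈ X, ‖(P w : Euc d →L[ℝ] Euc d)‖ ≤ T ∧ ‖(((P w)⁻¹ : GLd d) : Euc d →L[ℝ] Euc d)‖ ≤ T)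
    (y x₂ : M) (hy : y ∈ Xt ∩ measSupport μ) (hx₂ : x₂ ∈ localStable f δ y)
    (hPcocy : ∀ k : ℕ, P (f^[k] y) = cocycle f A k y * P y)
    (hPcocy₂ : ∀ k : ℕ, P (f^[k] x₂) = cocycle f A k x₂ * P x₂)
    (Hs : Euc d →L[ℝ] Euc d)
    (hHs : Tendsto (fun n : ℕ => cocycleInv f A n x₂ * cocycleCLM f A n y) atTop (𝓝 Hs))
    (hHsL : ‖Hs - 1‖ ≤ L * dist y x₂ ^ (α : ℝ))
    (mk : ℕ → ℕ) (hmk : Tendsto mk atTop atTop)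
    (hmkX : ∀ k : ℕ, f^[mk k] y ∈ X ∩ O ∧ f^[mk k] x₂ ∈ X ∩ O) :
    ‖1 - (P x₂ : Euc d →L[ℝ] Euc d) * (((P y)⁻¹ : GLd d) : Euc d →L[ℝ] Euc d)‖ ≤ ‖Hs - 1‖ ∧
    ‖(P y : Euc d →L[ℝ] Euc d) - (P x₂ : Euc d →L[ℝ] Euc d)‖ ≤ T * L * dist y x₂ ^ (α : ℝ) :=
  holonomy_estimate_for_P_general f μ A α P δ O X hPuc Xt hXt T L hPT y x₂ hy hx₂ hPcocy hPcocy₂ Hs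
    hHs hHsL mk hmk hmkX
end
end
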